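/- Assume the twisted-form setup with A perfect: k a commutative ring, R a commutative k-algebra, S a commutative R-algebra, A a perfect k-algebra, B an R-subalgebra of A_S = A⊗_k S, N a (B,R)-dimodule, N_S = N⊗_R S endowed with an (A_S,S)-dimodule structure compatible with the (B,R)-structure (b·(n⊗s) = (b·n)⊗s and (n⊗s)·b = (n·b)⊗s for b ∈ B, n ∈ N, s ∈ S), and π : N_S → N an R-linear map with π(b·m) = b·π(m) and π(m·b) = π(m)·b for all b ∈ B, m ∈ N_S. Suppose further that there is a k-linear map ε : Der_k(R, Cent_k(B,N)) → Der_k(S, Cent_k(A_S,N_S)) with ρ̃ ∘ ε = id, where ρ̃(d)(r) = ρ(d(r)) and ρ(f)(b) = π(f(b)). Then σ := ρ ∘ σ_S ∘ ε (with σ_S(d)(a⊗s) = d(s)(a⊗1)) is a k-linear section of η_{B,N}, and consequently the map d ↦ (d − σ(η_{B,N}(d)), η_{B,N}(d)) is a k-module isomorphism Der_k(B,N) ≅ Der_R(B,N) ⊕ Der_k(R, Cent_k(B,N)). -/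

import Mathlib

/-!
Put `η(d)(r)(b) = d(r • b) - r • d(b)`. Any `σ : Der_k(R, Cent_k(B,N)) → Der_k(B,N)` with
`η ∘ σ = id` splits `Der_k(B,N)`: `d - σ(η d)` is `R`-linear, and `η` vanishes exactly on the
`R`-linear maps, which gives uniqueness.

For `σ = ρ ∘ σ_S ∘ ε` everything comes from `A_S`. If `D ∈ Der_k(S, Cent_k(A_S,N_S))`, the Leibniz
rule of `D` gives `σ_S(D)(s • x) = D(s)(x) + s • σ_S(D)(x)`, and on pure tensors the centroid
property of `D(s)` makes `σ_S(D)` a derivation of `A_S`. Since `π` is a `B`-bimodule map, `ρ`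
keeps it a derivation on `B`, and its defect is `η(ρ(σ_S D))(r) = ρ(D(r))`; for `D = ε(D₀)` this
is `D₀(r)` because `ρ̃ ∘ ε = id`.
-/

/-- The `k`-submodule `Der_k(B,N)` of `Hom_k(B,N)`: `k`-linear derivations of the
`R`-algebra `B` (multiplication `mulB`) with values in the `(B,R)`-dimodule `N`. -/
def derkSubmodule {k R B N : Type*} [CommRing k] [CommRing R] [Algebra k R]
    [AddCommGroup B] [Module k B] [Module R B] [IsScalarTower k R B]
    [AddCommGroup N] [Module k N] [Module R N] [IsScalarTower k R N]
    (mulB : B →ₗ[R] B →ₗ[R] B)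
    (lactN : B →ₗ[R] N →ₗ[R] N) (ractN : N →ₗ[R] B →ₗ[R] N) :
    Submodule k (B →ₗ[k] N) where
  carrier := {d | ∀ b₁ b₂ : B, d (mulB b₁ b₂) = ractN (d b₁) b₂ + lactN b₁ (d b₂)}
  add_mem' := by
    intro f g hf hg b₁ b₂
    simp only [LinearMap.add_apply, hf b₁ b₂, hg b₁ b₂, map_add, LinearMap.add_apply]
    abel
  zero_mem' := by intro b₁ b₂; simp
  smul_mem' := by
    intro c f hf b₁ b₂
    simp only [LinearMap.smul_apply, hf b₁ b₂, smul_add,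
      LinearMap.map_smul_of_tower, LinearMap.smul_apply]

/-- The `k`-submodule `Der_k(R, Cent_k(B,N))` of `Hom_k(R, Hom_k(B,N))`: `k`-linear
maps `D` on `R` whose values are centroidal transformations and which satisfy the
Leibniz rule `D(r₁r₂) = D(r₁)·r₂ + r₁·D(r₂)` for the `R`-bimodule structure
`(r·χ)(b) = r • χ(b)`, `(χ·r)(b) = χ(r • b)` of the centroid. -/
def derRCentSubmodule {k R B N : Type*} [CommRing k] [CommRing R] [Algebra k R]
    [AddCommGroup B] [Module k B] [Module R B] [IsScalarTower k R B]
    [AddCommGroup N] [Module k N] [Module R N] [IsScalarTower k R N]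
    (mulB : B →ₗ[R] B →ₗ[R] B)
    (lactN : B →ₗ[R] N →ₗ[R] N) (ractN : N →ₗ[R] B →ₗ[R] N) :
    Submodule k (R →ₗ[k] (B →ₗ[k] N)) where
  carrier := {D |
    (∀ (r : R) (b₁ b₂ : B),
      D r (mulB b₁ b₂) = ractN (D r b₁) b₂ ∧ D r (mulB b₁ b₂) = lactN b₁ (D r b₂)) ∧
    (∀ (r₁ r₂ : R) (b : B),
      D (r₁ * r₂) b = D r₁ (r₂ • b) + r₁ • D r₂ b)}
  add_mem' := by
    intro f g hf hg
    refine ⟨fun r b₁ b₂ => ?_, fun r₁ r₂ b => ?_⟩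
    · constructor
      · simp only [LinearMap.add_apply, (hf.1 r b₁ b₂).1, (hg.1 r b₁ b₂).1, map_add,
          LinearMap.add_apply]
      · simp only [LinearMap.add_apply, (hf.1 r b₁ b₂).2, (hg.1 r b₁ b₂).2, map_add]
    · simp only [LinearMap.add_apply, hf.2 r₁ r₂ b, hg.2 r₁ r₂ b, smul_add]
      abel
  zero_mem' := by
    refine ⟨fun r b₁ b₂ => ?_, fun r₁ r₂ b => ?_⟩ <;> simp
  smul_mem' := by
    intro c f hf
    refine ⟨fun r b₁ b₂ => ?_, fun r₁ r₂ b => ?_⟩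
    · constructor
      · simp only [LinearMap.smul_apply, (hf.1 r b₁ b₂).1,
          LinearMap.map_smul_of_tower, LinearMap.smul_apply]
      · simp only [LinearMap.smul_apply, (hf.1 r b₁ b₂).2, LinearMap.map_smul_of_tower]
    · simp only [LinearMap.smul_apply, hf.2 r₁ r₂ b, smul_add, smul_comm c r₁]

open TensorProduct

/-- The multiplication of an `R`-subalgebra `B` of `A_S = S ⊗[k] A`, i.e. of an
`R`-submodule closed under the multiplication `mulS` of `A_S`, bundled as an
`R`-bilinear map on `↥B`. -/
def subalgMul {k R S A : Type*} [CommRing k]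
    [CommRing R] [Algebra k R]
    [CommRing S] [Algebra R S] [Algebra k S] [IsScalarTower k R S]
    [AddCommGroup A] [Module k A]
    (mulS : (S ⊗[k] A) →ₗ[S] (S ⊗[k] A) →ₗ[S] (S ⊗[k] A))
    (B : Submodule R (S ⊗[k] A))
    (hB : ∀ x ∈ B, ∀ y ∈ B, mulS x y ∈ B) :
    ↥B →ₗ[R] ↥B →ₗ[R] ↥B where
  toFun b₁ :=
    { toFun := fun b₂ => ⟨mulS ↑b₁ ↑b₂, hB _ b₁.2 _ b₂.2⟩
      map_add' := fun x y => Subtype.ext (by simp)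
      map_smul' := fun r x => Subtype.ext (by simp) }
  map_add' x y := LinearMap.ext fun b => Subtype.ext (by simp)
  map_smul' r x := LinearMap.ext fun b => Subtype.ext (by simp)

section ScalarDefect

variable {k R B N : Type*} [CommRing k] [CommRing R] [Algebra k R]
  [AddCommGroup B] [Module k B] [Module R B] [IsScalarTower k R B]
  [AddCommGroup N] [Module k N] [Module R N] [IsScalarTower k R N]

/-- The map `η_{B,N}`. -/
def scalarDefect (d : B →ₗ[k] N) : R →ₗ[k] B →ₗ[k] N :=
  LinearMap.mk₂ k (fun r b => d (r • b) - r • d b)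
    (fun r₁ r₂ b => by simp only [add_smul, map_add]; abel)
    (fun c r b => by rw [smul_assoc, map_smul, smul_assoc, smul_sub])
    (fun r b₁ b₂ => by simp only [smul_add, map_add]; abel)
    (fun c r b => by
      rw [smul_comm r c b, d.map_smul, d.map_smul, smul_comm r c (d b), smul_sub])

@[simp]
theorem scalarDefect_apply (d : B →ₗ[k] N) (r : R) (b : B) :
    scalarDefect d r b = d (r • b) - r • d b := rfl

variable {mulB : B →ₗ[R] B →ₗ[R] B} {lactN : B →ₗ[R] N →ₗ[R] N} {ractN : N →ₗ[R] B →ₗ[R] N}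

theorem scalarDefect_mem_derRCentSubmodule {d : B →ₗ[k] N}
    (hd : d ∈ derkSubmodule mulB lactN ractN) :
    scalarDefect d ∈ derRCentSubmodule mulB lactN ractN := by
  refine ⟨fun r b₁ b₂ => ⟨?_, ?_⟩, fun r₁ r₂ b => ?_⟩
  · calc scalarDefect d r (mulB b₁ b₂)
        = d (mulB (r • b₁) b₂) - r • d (mulB b₁ b₂) := by
          rw [scalarDefect_apply, LinearMap.map_smul₂]
      _ = ractN (scalarDefect d r b₁) b₂ := by
          rw [hd, hd, scalarDefect_apply]
          simp only [map_sub, LinearMap.sub_apply, map_smul, LinearMap.smul_apply, smul_add]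
          abel
  · calc scalarDefect d r (mulB b₁ b₂)
        = d (mulB b₁ (r • b₂)) - r • d (mulB b₁ b₂) := by
          rw [scalarDefect_apply, LinearMap.map_smul]
      _ = lactN b₁ (scalarDefect d r b₂) := by
          rw [hd, hd, scalarDefect_apply]
          simp only [map_sub, map_smul, smul_add]
          abel
  · simp only [scalarDefect_apply, mul_smul, smul_sub, smul_comm r₁ r₂ (d b)]
    abel

theorem existsUnique_decomposition_of_scalarDefect_section
    (σ : derRCentSubmodule (k := k) mulB lactN ractN → B →ₗ[k] N)
    (hσ_mem : ∀ D, σ D ∈ derkSubmodule mulB lactN ractN)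
    (hσ : ∀ D, scalarDefect (σ D) = D.1) {d : B →ₗ[k] N}
    (hd : d ∈ derkSubmodule mulB lactN ractN) :
    ∃! p : (B →ₗ[k] N) × derRCentSubmodule (k := k) mulB lactN ractN,
      p.1 ∈ derkSubmodule mulB lactN ractN ∧ (∀ (r : R) (b : B), p.1 (r • b) = r • p.1 b) ∧
        ∀ b, d b = p.1 b + σ p.2 b := by
  set D : derRCentSubmodule (k := k) mulB lactN ractN :=
    ⟨scalarDefect d, scalarDefect_mem_derRCentSubmodule hd⟩
  refine ⟨(d - σ D, D), ⟨sub_mem hd (hσ_mem D), fun r b => ?_, fun b => by simp⟩, ?_⟩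
  · have h := LinearMap.congr_fun₂ (hσ D) r b
    simp only [scalarDefect_apply, D] at h
    rw [LinearMap.sub_apply, LinearMap.sub_apply, smul_sub, sub_eq_sub_iff_sub_eq_sub, h]
  · rintro ⟨q, D'⟩ ⟨-, hqR, hdq⟩
    have hσD' : ∀ b, σ D' b = d b - q b := fun b => by rw [hdq b]; abel
    have hD' : D' = D := by
      ext r b
      rw [← hσ D', scalarDefect_apply, hσD', hσD', hqR, smul_sub]
      simp only [D, scalarDefect_apply]
      abel
    subst hD'
    ext b : 2
    · simp [hσD']
    · rfl

end ScalarDefect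

section TensorExtension

variable {k S A M : Type*} [CommRing k] [CommRing S] [Algebra k S]
  [AddCommGroup A] [Module k A]
  [AddCommGroup M] [Module k M] [Module S M]

theorem apply_smul_of_apply_tmul {D : S →ₗ[k] (S ⊗[k] A) →ₗ[k] M}
    (hD : ∀ (s₁ s₂ : S) (x : S ⊗[k] A), D (s₁ * s₂) x = D s₁ (s₂ • x) + s₁ • D s₂ x)
    {f : (S ⊗[k] A) →ₗ[k] M} (hf : ∀ (s : S) (a : A), f (s ⊗ₜ a) = D s (1 ⊗ₜ a))
    (s : S) (x : S ⊗[k] A) :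
    f (s • x) = D s x + s • f x := by
  induction x using TensorProduct.induction_on with
  | zero => simp
  | tmul s' a =>
    rw [smul_tmul', smul_eq_mul, hf, hD, hf, smul_tmul', smul_eq_mul, mul_one]
  | add x y hx hy =>
    rw [smul_add, map_add, hx, hy, map_add, map_add, smul_add]
    abel

theorem mem_derkSubmodule_of_apply_tmul [IsScalarTower k S M] {mul : A →ₗ[k] A →ₗ[k] A}
    {mulS : (S ⊗[k] A) →ₗ[S] (S ⊗[k] A) →ₗ[S] (S ⊗[k] A)}
    (hmulS : ∀ (s₁ s₂ : S) (a₁ a₂ : A),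
      mulS (s₁ ⊗ₜ a₁) (s₂ ⊗ₜ a₂) = (s₁ * s₂) ⊗ₜ (mul a₁ a₂))
    {lact : (S ⊗[k] A) →ₗ[S] M →ₗ[S] M} {ract : M →ₗ[S] (S ⊗[k] A) →ₗ[S] M}
    {D : S →ₗ[k] (S ⊗[k] A) →ₗ[k] M} (hD : D ∈ derRCentSubmodule mulS lact ract)
    {f : (S ⊗[k] A) →ₗ[k] M} (hf : ∀ (s : S) (a : A), f (s ⊗ₜ a) = D s (1 ⊗ₜ a)) :
    f ∈ derkSubmodule mulS lact ract := by
  have smul_one_tmul : ∀ (s : S) (a : A), s • ((1 : S) ⊗ₜ[k] a) = s ⊗ₜ a := fun s a => by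
    rw [smul_tmul', smul_eq_mul, mul_one]
  intro x y
  induction x using TensorProduct.induction_on with
  | zero => simp
  | add x₁ x₂ hx₁ hx₂ => simp only [map_add, LinearMap.add_apply, hx₁, hx₂]; abel
  | tmul s₁ a₁ =>
    induction y using TensorProduct.induction_on with
    | zero => simp
    | add y₁ y₂ hy₁ hy₂ => simp only [map_add, hy₁, hy₂]; abel
    | tmul s₂ a₂ =>
      calc f (mulS (s₁ ⊗ₜ a₁) (s₂ ⊗ₜ a₂))
          = D s₁ (s₂ • (1 ⊗ₜ mul a₁ a₂)) + s₁ • D s₂ (1 ⊗ₜ mul a₁ a₂) := by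
            rw [hmulS, hf, hD.2]
        _ = D s₁ (mulS (1 ⊗ₜ a₁) (s₂ ⊗ₜ a₂)) + s₁ • D s₂ (mulS (1 ⊗ₜ a₁) (1 ⊗ₜ a₂)) := by
            rw [hmulS, hmulS, one_mul, one_mul, smul_one_tmul]
        _ = ract (D s₁ (1 ⊗ₜ a₁)) (s₂ ⊗ₜ a₂) + lact (s₁ • (1 ⊗ₜ a₁)) (D s₂ (1 ⊗ₜ a₂)) := by
            rw [(hD.1 s₁ _ _).1, (hD.1 s₂ _ _).2, map_smul, LinearMap.smul_apply]
        _ = ract (f (s₁ ⊗ₜ a₁)) (s₂ ⊗ₜ a₂) + lact (s₁ ⊗ₜ a₁) (f (s₂ ⊗ₜ a₂)) := by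
            rw [smul_one_tmul, hf, hf]

end TensorExtension

section Restriction

variable {k R S X M N : Type*} [CommRing k] [CommRing R] [Algebra k R]
  [CommRing S] [Algebra R S]
  [AddCommGroup X] [Module k X] [Module R X] [Module S X] [IsScalarTower k R X]
  [IsScalarTower R S X]
  [AddCommGroup M] [Module k M] [Module R M] [Module S M] [IsScalarTower k R M]
  [IsScalarTower R S M]
  [AddCommGroup N] [Module k N] [Module R N] [IsScalarTower k R N]

/-- The map `ρ` of the paper, `ρ(f)(b) = π(f(b))`. -/
def projRestrict (π : M →ₗ[R] N) (B : Submodule R X) (f : X →ₗ[k] M) : ↥B →ₗ[k] N :=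
  π.restrictScalars k ∘ₗ f ∘ₗ B.subtype.restrictScalars k

theorem scalarDefect_projRestrict (π : M →ₗ[R] N) (B : Submodule R X) {f : X →ₗ[k] M}
    {E : S → X → M} (hf : ∀ (s : S) (x : X), f (s • x) = E s x + s • f x) (r : R) (b : ↥B) :
    scalarDefect (projRestrict π B f) r b = π (E (algebraMap R S r) b) := by
  have hb : ((r • b : ↥B) : X) = algebraMap R S r • (b : X) := (algebraMap_smul S r _).symm
  simp only [scalarDefect_apply, projRestrict, LinearMap.coe_comp, Function.comp_apply,
    LinearMap.coe_restrictScalars, Submodule.coe_subtype]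
  rw [hb, hf, map_add, algebraMap_smul, map_smul, add_sub_cancel_right]

end Restriction

theorem projRestrict_mem_derkSubmodule {k R S A N : Type*} [CommRing k] [CommRing R]
    [Algebra k R] [CommRing S] [Algebra R S] [Algebra k S] [IsScalarTower k R S]
    [AddCommGroup A] [Module k A]
    [AddCommGroup N] [Module R N] [Module k N] [IsScalarTower k R N]
    {mulS : (S ⊗[k] A) →ₗ[S] (S ⊗[k] A) →ₗ[S] (S ⊗[k] A)} {B : Submodule R (S ⊗[k] A)}
    (hB : ∀ x ∈ B, ∀ y ∈ B, mulS x y ∈ B)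
    {lactN : ↥B →ₗ[R] N →ₗ[R] N} {ractN : N →ₗ[R] ↥B →ₗ[R] N}
    {lactS : (S ⊗[k] A) →ₗ[S] (S ⊗[R] N) →ₗ[S] (S ⊗[R] N)}
    {ractS : (S ⊗[R] N) →ₗ[S] (S ⊗[k] A) →ₗ[S] (S ⊗[R] N)} {π : (S ⊗[R] N) →ₗ[R] N}
    (hπL : ∀ (b : ↥B) (m : S ⊗[R] N), π (lactS b m) = lactN b (π m))
    (hπR : ∀ (b : ↥B) (m : S ⊗[R] N), π (ractS m b) = ractN (π m) b)
    {f : (S ⊗[k] A) →ₗ[k] (S ⊗[R] N)} (hf : f ∈ derkSubmodule mulS lactS ractS) :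
    projRestrict π B f ∈ derkSubmodule (B := ↥B) (subalgMul mulS B hB) lactN ractN := fun b₁ b₂ => by
  change π (f (mulS b₁ b₂)) = ractN (π (f b₁)) b₂ + lactN b₁ (π (f b₂))
  rw [hf, map_add, hπR, hπL]

set_option maxHeartbeats 1000000 in
theorem stmt_15_general {k R S A N : Type*} [CommRing k]
    [CommRing R] [Algebra k R]
    [CommRing S] [Algebra R S] [Algebra k S] [IsScalarTower k R S]
    [AddCommGroup A] [Module k A]
    [AddCommGroup N] [Module R N] [Module k N] [IsScalarTower k R N]
    (mul : A →ₗ[k] A →ₗ[k] A)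
    (mulS : (S ⊗[k] A) →ₗ[S] (S ⊗[k] A) →ₗ[S] (S ⊗[k] A))
    (hmulS : ∀ (s₁ s₂ : S) (a₁ a₂ : A),
      mulS (s₁ ⊗ₜ a₁) (s₂ ⊗ₜ a₂) = (s₁ * s₂) ⊗ₜ (mul a₁ a₂))
    (B : Submodule R (S ⊗[k] A))
    (hB : ∀ x ∈ B, ∀ y ∈ B, mulS x y ∈ B)
    (lactN : ↥B →ₗ[R] N →ₗ[R] N) (ractN : N →ₗ[R] ↥B →ₗ[R] N)
    (lactS : (S ⊗[k] A) →ₗ[S] (S ⊗[R] N) →ₗ[S] (S ⊗[R] N))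
    (ractS : (S ⊗[R] N) →ₗ[S] (S ⊗[k] A) →ₗ[S] (S ⊗[R] N))
    (π : (S ⊗[R] N) →ₗ[R] N)
    (hπL : ∀ (b : ↥B) (m : S ⊗[R] N), π (lactS (↑b) m) = lactN b (π m))
    (hπR : ∀ (b : ↥B) (m : S ⊗[R] N), π (ractS m (↑b)) = ractN (π m) b)
    (σS : ↥(derRCentSubmodule (k := k) mulS lactS ractS) →ₗ[k]
        ((S ⊗[k] A) →ₗ[k] (S ⊗[R] N)))
    (hσS : ∀ (D : ↥(derRCentSubmodule (k := k) mulS lactS ractS)) (s : S) (a : A),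
      σS D (s ⊗ₜ a) = D.1 s ((1 : S) ⊗ₜ a))
    (ε : ↥(derRCentSubmodule (k := k) (B := ↥B) (subalgMul mulS B hB) lactN ractN) →ₗ[k]
        ↥(derRCentSubmodule (k := k) mulS lactS ractS))
    (hε : ∀ (D : ↥(derRCentSubmodule (k := k) (B := ↥B) (subalgMul mulS B hB) lactN ractN))
        (r : R) (b : ↥B),
      π ((ε D).1 (algebraMap R S r) ↑b) = D.1 r b) :
    (∀ (D : ↥(derRCentSubmodule (k := k) (B := ↥B) (subalgMul mulS B hB) lactN ractN))
        (r : R) (b : ↥B),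
      π (σS (ε D) ↑(r • b)) - r • π (σS (ε D) ↑b) = D.1 r b) ∧
    (∀ d : ↥B →ₗ[k] N,
      d ∈ derkSubmodule (k := k) (B := ↥B) (subalgMul mulS B hB) lactN ractN →
      ∃! p : (↥B →ₗ[k] N) ×
          ↥(derRCentSubmodule (k := k) (B := ↥B) (subalgMul mulS B hB) lactN ractN),
        p.1 ∈ derkSubmodule (k := k) (B := ↥B) (subalgMul mulS B hB) lactN ractN ∧
        (∀ (r : R) (b : ↥B), p.1 (r • b) = r • p.1 b) ∧
        ∀ b : ↥B, d b = p.1 b + π (σS (ε p.2) ↑b)) := by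
  let σ (D : derRCentSubmodule (k := k) (B := ↥B) (subalgMul mulS B hB) lactN ractN) :
      ↥B →ₗ[k] N :=
    projRestrict π B (σS (ε D))
  have hσ : ∀ D, scalarDefect (σ D) = D.1 := fun D => by
    ext r b
    exact (scalarDefect_projRestrict π B (apply_smul_of_apply_tmul (ε D).2.2 (hσS (ε D))) r b).trans
      (hε D r b)
  have hσ_mem : ∀ D, σ D ∈ derkSubmodule (B := ↥B) (subalgMul mulS B hB) lactN ractN := fun D =>
    projRestrict_mem_derkSubmodule hB hπL hπR
      (mem_derkSubmodule_of_apply_tmul hmulS (ε D).2 (hσS (ε D)))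
  exact ⟨fun D => LinearMap.congr_fun₂ (hσ D),
    fun d hd => existsUnique_decomposition_of_scalarDefect_section σ hσ_mem hσ hd⟩

set_option maxHeartbeats 1000000 in
/-- (Twisted-form setup with `A` perfect, as in Statement 12.)
Suppose `ε : Der_k(R, Cent_k(B,N)) → Der_k(S, Cent_k(A_S,N_S))` is a `k`-linear
map with `ρ̃ ∘ ε = id`, and let `σ_S` be the `k`-linear map of Statement 11
(`σ_S(D)(s ⊗ a) = D(s)(1 ⊗ a)`).  Then `σ := ρ ∘ σ_S ∘ ε` is a section of
`η_{B,N}` (part 1), and consequently every `d ∈ Der_k(B,N)` decomposes uniquely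
as `d = d₀ + σ(D)` with `d₀ ∈ Der_R(B,N)` and `D ∈ Der_k(R, Cent_k(B,N))`;
i.e. `d ↦ (d − σ(η(d)), η(d))` is a `k`-module isomorphism
`Der_k(B,N) ≅ Der_R(B,N) ⊕ Der_k(R, Cent_k(B,N))` (part 2). -/
theorem stmt_15 {k R S A N : Type*} [CommRing k]
    [CommRing R] [Algebra k R]
    [CommRing S] [Algebra R S] [Algebra k S] [IsScalarTower k R S]
    [AddCommGroup A] [Module k A]
    [AddCommGroup N] [Module R N] [Module k N] [IsScalarTower k R N]
    (mul : A →ₗ[k] A →ₗ[k] A)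
    (hperf : Submodule.span k {x : A | ∃ a b : A, x = mul a b} = ⊤)
    (mulS : (S ⊗[k] A) →ₗ[S] (S ⊗[k] A) →ₗ[S] (S ⊗[k] A))
    (hmulS : ∀ (s₁ s₂ : S) (a₁ a₂ : A),
      mulS (s₁ ⊗ₜ a₁) (s₂ ⊗ₜ a₂) = (s₁ * s₂) ⊗ₜ (mul a₁ a₂))
    (B : Submodule R (S ⊗[k] A))
    (hB : ∀ x ∈ B, ∀ y ∈ B, mulS x y ∈ B)
    (lactN : ↥B →ₗ[R] N →ₗ[R] N) (ractN : N →ₗ[R] ↥B →ₗ[R] N)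
    (lactS : (S ⊗[k] A) →ₗ[S] (S ⊗[R] N) →ₗ[S] (S ⊗[R] N))
    (ractS : (S ⊗[R] N) →ₗ[S] (S ⊗[k] A) →ₗ[S] (S ⊗[R] N))
    (hcompatL : ∀ (b : ↥B) (s : S) (n : N),
      lactS (↑b) (s ⊗ₜ n) = s ⊗ₜ (lactN b n))
    (hcompatR : ∀ (b : ↥B) (s : S) (n : N),
      ractS (s ⊗ₜ n) (↑b) = s ⊗ₜ (ractN n b))
    (π : (S ⊗[R] N) →ₗ[R] N)
    (hπL : ∀ (b : ↥B) (m : S ⊗[R] N), π (lactS (↑b) m) = lactN b (π m))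
    (hπR : ∀ (b : ↥B) (m : S ⊗[R] N), π (ractS m (↑b)) = ractN (π m) b)
    (σS : ↥(derRCentSubmodule (k := k) mulS lactS ractS) →ₗ[k]
        ((S ⊗[k] A) →ₗ[k] (S ⊗[R] N)))
    (hσS : ∀ (D : ↥(derRCentSubmodule (k := k) mulS lactS ractS)) (s : S) (a : A),
      σS D (s ⊗ₜ a) = D.1 s ((1 : S) ⊗ₜ a))
    (ε : ↥(derRCentSubmodule (k := k) (B := ↥B) (subalgMul mulS B hB) lactN ractN) →ₗ[k]
        ↥(derRCentSubmodule (k := k) mulS lactS ractS))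
    (hε : ∀ (D : ↥(derRCentSubmodule (k := k) (B := ↥B) (subalgMul mulS B hB) lactN ractN))
        (r : R) (b : ↥B),
      π ((ε D).1 (algebraMap R S r) ↑b) = D.1 r b) :
    (∀ (D : ↥(derRCentSubmodule (k := k) (B := ↥B) (subalgMul mulS B hB) lactN ractN))
        (r : R) (b : ↥B),
      π (σS (ε D) ↑(r • b)) - r • π (σS (ε D) ↑b) = D.1 r b) ∧
    (∀ d : ↥B →ₗ[k] N,
      d ∈ derkSubmodule (k := k) (B := ↥B) (subalgMul mulS B hB) lactN ractN →
      ∃! p : (↥B →ₗ[k] N) ×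
          ↥(derRCentSubmodule (k := k) (B := ↥B) (subalgMul mulS B hB) lactN ractN),
        p.1 ∈ derkSubmodule (k := k) (B := ↥B) (subalgMul mulS B hB) lactN ractN ∧
        (∀ (r : R) (b : ↥B), p.1 (r • b) = r • p.1 b) ∧
        ∀ b : ↥B, d b = p.1 b + π (σS (ε p.2) ↑b)) :=
  stmt_15_general mul mulS hmulS B hB lactN ractN lactS ractS π hπL hπR σS hσS ε hε
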